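/- For every measurable f : ℝ → ℝ such that T·(R + f(T)) is square-integrable, the variance of the modified outcome Ŷ = T·(R + f(T)) decomposes as Var[T·(R + f(T))] = E[T²·(R − E[R|T])²] + Var[T·(E[R|T] + f(T))]. -/

import Mathlib

open MeasureTheory ProbabilityTheory

/-- Variance as defined in the context: `Var[Z] = E[Z²] − (E[Z])²`. -/
noncomputable def Var {Ω : Type*} [MeasureSpace Ω] (Z : Ω → ℝ) : ℝ :=
  (∫ ω, (Z ω) ^ 2) - (∫ ω, Z ω) ^ 2

/-!
Write `T·(R + f(T)) = X + G` with `X = T·(R − E[R|T])` and `G = T·(E[R|T] + f(T))`.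
Both `T` and `T·G` are functions of `T`, and `R − E[R|T]` is orthogonal to every such function,
so `E[X] = 0` and `E[X·G] = 0`. Hence `X` and `G` are uncorrelated and
`Var[X + G] = Var[X] + Var[G] = E[X²] + Var[G]`.
-/

lemma var_eq_variance {Ω : Type*} [MeasureSpace Ω] [IsProbabilityMeasure (ℙ : Measure Ω)]
    {Z : Ω → ℝ} (hZ : MemLp Z 2 ℙ) : Var Z = variance Z ℙ := by
  rw [variance_eq_sub hZ]
  rfl

lemma variance_add_of_integral_eq_zero {Ω : Type*} {m0 : MeasurableSpace Ω} {μ : Measure Ω}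
    [IsProbabilityMeasure μ] {X Y : Ω → ℝ} (hX : MemLp X 2 μ) (hY : MemLp Y 2 μ)
    (hX0 : μ[X] = 0) (hXY : μ[X * Y] = 0) :
    variance (X + Y) μ = μ[X ^ 2] + variance Y μ := by
  rw [variance_add hX hY, covariance_eq_sub hX hY, variance_eq_sub hX, hX0, hXY]
  ring

section CondExp

variable {Ω : Type*} {m m0 : MeasurableSpace Ω} {μ : Measure Ω}

lemma integral_mul_sub_condExp_eq_zero (hm : m ≤ m0) [SigmaFinite (μ.trim hm)]
    {ψ R : Ω → ℝ} (hψ : StronglyMeasurable[m] ψ) (hR : Integrable R μ)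
    (hψR : Integrable (fun ω => ψ ω * (R ω - μ[R|m] ω)) μ) :
    ∫ ω, ψ ω * (R ω - μ[R|m] ω) ∂μ = 0 := by
  have hresidual : μ[R - μ[R|m] | m] =ᵐ[μ] 0 := by
    filter_upwards [condExp_sub hR integrable_condExp m] with ω hω
    rw [hω, Pi.sub_apply, condExp_of_stronglyMeasurable hm stronglyMeasurable_condExp
      integrable_condExp, sub_self, Pi.zero_apply]
  calc ∫ ω, ψ ω * (R ω - μ[R|m] ω) ∂μ
      = ∫ ω, μ[ψ * (R - μ[R|m]) | m] ω ∂μ := (integral_condExp hm).symm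
    _ = ∫ ω, (ψ * μ[R - μ[R|m] | m]) ω ∂μ :=
        integral_congr_ae (condExp_mul_of_stronglyMeasurable_left hψ hψR
          (hR.sub integrable_condExp))
    _ = ∫ _, (0 : ℝ) ∂μ := integral_congr_ae <| by
        filter_upwards [hresidual] with ω hω
        simp [hω]
    _ = 0 := integral_zero _ _

lemma memLp_mul_sub_condExp {T R : Ω → ℝ} (hT : MemLp T ⊤ μ) (hR : MemLp R 2 μ) :
    MemLp (fun ω => T ω * (R ω - μ[R|m] ω)) 2 μ :=
  (hR.sub (hR.condExp one_le_two)).mul' hT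

lemma memLp_mul_condExp_add {T R g : Ω → ℝ} (hT : MemLp T ⊤ μ) (hR : MemLp R 2 μ)
    (hY : MemLp (fun ω => T ω * (R ω + g ω)) 2 μ) :
    MemLp (fun ω => T ω * (μ[R|m] ω + g ω)) 2 μ := by
  convert hY.sub (memLp_mul_sub_condExp (m := m) hT hR) using 1
  ext ω
  simp only [Pi.sub_apply]
  ring

lemma variance_mul_add_eq_integral_add_variance_condExp (hm : m ≤ m0) [IsProbabilityMeasure μ]
    {T R g : Ω → ℝ} (hTm : StronglyMeasurable[m] T) (hT : MemLp T ⊤ μ) (hR : MemLp R 2 μ)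
    (hg : StronglyMeasurable[m] g) (hY : MemLp (fun ω => T ω * (R ω + g ω)) 2 μ) :
    variance (fun ω => T ω * (R ω + g ω)) μ
      = ∫ ω, T ω ^ 2 * (R ω - μ[R|m] ω) ^ 2 ∂μ
        + variance (fun ω => T ω * (μ[R|m] ω + g ω)) μ := by
  set X : Ω → ℝ := fun ω => T ω * (R ω - μ[R|m] ω)
  set G : Ω → ℝ := fun ω => T ω * (μ[R|m] ω + g ω)
  have hX : MemLp X 2 μ := memLp_mul_sub_condExp hT hR
  have hG : MemLp G 2 μ := memLp_mul_condExp_add hT hR hY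
  have hX0 : μ[X] = 0 :=
    integral_mul_sub_condExp_eq_zero hm hTm (hR.integrable one_le_two) (hX.integrable one_le_two)
  have hXG : μ[X * G] = 0 := by
    have hTG : StronglyMeasurable[m] (T * G) :=
      hTm.mul (hTm.mul (stronglyMeasurable_condExp.add hg))
    convert integral_mul_sub_condExp_eq_zero hm hTG (hR.integrable one_le_two) ?_ using 3 with ω
    · simp only [X, Pi.mul_apply]
      ring
    · convert hX.integrable_mul hG using 1
      ext ω
      simp only [X, Pi.mul_apply]
      ring
  have hsum : (fun ω => T ω * (R ω + g ω)) = X + G := by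
    ext ω
    simp only [X, G, Pi.add_apply]
    ring
  rw [hsum, variance_add_of_integral_eq_zero hX hG hX0 hXG]
  congr 1
  refine integral_congr_ae (Filter.Eventually.of_forall fun ω => ?_)
  simp only [X, Pi.pow_apply]
  ring

end CondExp

/-- For every measurable `f` with `T·(R + f(T))` square-integrable, the variance of the
modified outcome decomposes as
`Var[T·(R + f(T))] = E[T²·(R − E[R|T])²] + Var[T·(E[R|T] + f(T))]`. -/
theorem variance_decomposition_of_modified_outcome
    {Ω : Type*} [MeasureSpace Ω] [IsProbabilityMeasure (ℙ : Measure Ω)]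
    (T R : Ω → ℝ) (hT : Measurable T) (hTbdd : ∃ C : ℝ, ∀ ω, |T ω| ≤ C)
    (hR : MemLp R 2 ℙ)
    (cE : Ω → ℝ) (hcE : cE = ℙ[R | MeasurableSpace.comap T inferInstance])
    (f : ℝ → ℝ) (hf : Measurable f)
    (hf2 : MemLp (fun ω => T ω * (R ω + f (T ω))) 2 ℙ) :
    Var (fun ω => T ω * (R ω + f (T ω)))
      = (∫ ω, (T ω) ^ 2 * (R ω - cE ω) ^ 2)
        + Var (fun ω => T ω * (cE ω + f (T ω))) := by
  have hTm : Measurable[MeasurableSpace.comap T inferInstance] T := comap_measurable T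
  obtain ⟨C, hC⟩ := hTbdd
  have hT_top : MemLp T ⊤ ℙ := memLp_top_of_bound hT.aestronglyMeasurable C (.of_forall hC)
  subst hcE
  rw [var_eq_variance hf2, var_eq_variance (memLp_mul_condExp_add hT_top hR hf2)]
  exact variance_mul_add_eq_integral_add_variance_condExp hT.comap_le hTm.stronglyMeasurable
    hT_top hR (hf.comp hTm).stronglyMeasurable hf2
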